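/- arXiv:2401.00492 — 6 statements merged into one kernel-verified Lean document; each statement's English description precedes it below -/
import Mathlib

section
/- The Chebyshev polynomials of the second kind U_n satisfy: there exists a constant C > 0 such that for all x ∈ [0, 0.1) and all n ≥ 1, U_n(1+x) ≥ exp(C n √x); moreover |U_n(1+x)| ≤ 2n for all -1 ≤ x ≤ 0 and n ≥ 1. -/
open Polynomial

/-!
If `a ≥ 1` and `a + a⁻¹ ≤ 2y`, the recurrence `U_{n+2}(y) = 2y U_{n+1}(y) - U_n(y)` preserves
`U_{n+1}(y) ≥ a U_n(y) ≥ 0`, hence `U_n(y) ≥ aⁿ`. Taking `a = exp √x`, the condition reads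
`cosh √x ≤ 1 + x`, which holds for `x ≤ 1` by the second-order bound on `exp`; so the lower bound
holds with `C = 1`. On `[-1, 1]`, `U_{n+1} = X U_n + T_{n+1}` with `|T_{n+1}| ≤ 1` gives
`|U_n| ≤ n + 1 ≤ 2n`.
-/

lemma Real.cosh_le_one_add_sq {s : ℝ} (hs : |s| ≤ 1) : Real.cosh s ≤ 1 + s ^ 2 := by
  have h₁ := (abs_le.1 (Real.abs_exp_sub_one_sub_id_le hs)).2
  have h₂ := (abs_le.1 (Real.abs_exp_sub_one_sub_id_le (abs_neg s ▸ hs))).2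
  rw [Real.cosh_eq]
  linarith [neg_sq s]

namespace Polynomial.Chebyshev

lemma eval_U_nat_add_two {R : Type*} [CommRing R] (y : R) (n : ℕ) :
    (U R (n + 2 : ℕ)).eval y = 2 * y * (U R (n + 1 : ℕ)).eval y - (U R n).eval y := by
  simp [U_add_two]

section Ordered

variable {R : Type*} [Field R] [LinearOrder R] [IsStrictOrderedRing R]

lemma pow_le_eval_U_and_mul_eval_U_le {a y : R} (ha : 1 ≤ a) (hy : a + a⁻¹ ≤ 2 * y) (n : ℕ) :
    a ^ n ≤ (U R n).eval y ∧ a * (U R n).eval y ≤ (U R (n + 1 : ℕ)).eval y := by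
  have ha₀ : 0 < a := zero_lt_one.trans_le ha
  induction n with
  | zero =>
    simp only [Nat.cast_zero, Nat.cast_one, zero_add, pow_zero, U_zero, U_one, eval_one,
      eval_mul, eval_ofNat, eval_X, mul_one, le_refl, true_and]
    nlinarith [inv_pos.2 ha₀]
  | succ n ih =>
    obtain ⟨hpow, hmul⟩ := ih
    have hpow' : a ^ (n + 1) ≤ (U R (n + 1 : ℕ)).eval y := by
      rw [pow_succ']
      exact (mul_le_mul_of_nonneg_left hpow ha₀.le).trans hmul
    have hinv : (U R n).eval y ≤ a⁻¹ * (U R (n + 1 : ℕ)).eval y := by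
      rwa [le_inv_mul_iff₀ ha₀]
    have hnonneg : 0 ≤ (U R (n + 1 : ℕ)).eval y := (pow_nonneg ha₀.le _).trans hpow'
    refine ⟨hpow', ?_⟩
    rw [eval_U_nat_add_two]
    nlinarith [mul_le_mul_of_nonneg_right hy hnonneg]

theorem pow_le_eval_U {a y : R} (ha : 1 ≤ a) (hy : a + a⁻¹ ≤ 2 * y) (n : ℕ) :
    a ^ n ≤ (U R n).eval y :=
  (pow_le_eval_U_and_mul_eval_U_le ha hy n).1

end Ordered

theorem abs_eval_U_real_le {y : ℝ} (hy : |y| ≤ 1) (n : ℕ) : |(U ℝ n).eval y| ≤ n + 1 := by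
  induction n with
  | zero => simp
  | succ n ih =>
    calc |(U ℝ (n + 1 : ℕ)).eval y|
        = |y * (U ℝ n).eval y + (T ℝ (n + 1 : ℕ)).eval y| := by
          push_cast
          simp [U_eq_X_mul_U_add_T]
      _ ≤ |y| * |(U ℝ n).eval y| + |(T ℝ (n + 1 : ℕ)).eval y| := by
          rw [← abs_mul]
          exact abs_add_le _ _
      _ ≤ 1 * (n + 1) + 1 := by
          gcongr
          exact abs_eval_T_real_le_one _ hy
      _ = (n + 1 : ℕ) + 1 := by push_cast; ring

end Polynomial.Chebyshev

/-- Chebyshev polynomials of the second kind: exponential lower bound just above 1,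
and linear bound on `[-1, 1]` (Lemma B.8). -/
theorem chebyshevU_bounds :
    ∃ C : ℝ, 0 < C ∧
      (∀ x : ℝ, x ∈ Set.Ico (0 : ℝ) 0.1 → ∀ n : ℕ, 1 ≤ n →
        Real.exp (C * n * Real.sqrt x) ≤ (Chebyshev.U ℝ n).eval (1 + x)) ∧
      (∀ x : ℝ, -1 ≤ x → x ≤ 0 → ∀ n : ℕ, 1 ≤ n →
        |(Chebyshev.U ℝ n).eval (1 + x)| ≤ 2 * n) := by
  refine ⟨1, one_pos, fun x ⟨hx₀, hx₁⟩ n _ => ?_, fun x hx₀ hx₁ n hn => ?_⟩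
  · have hs : |√x| ≤ 1 := by
      rw [abs_of_nonneg (Real.sqrt_nonneg x), Real.sqrt_le_one]
      linarith
    have hcosh : Real.exp √x + (Real.exp √x)⁻¹ ≤ 2 * (1 + x) := by
      rw [← Real.exp_neg]
      linarith [Real.cosh_le_one_add_sq hs, Real.cosh_eq √x, Real.sq_sqrt hx₀]
    rw [one_mul, Real.exp_nat_mul]
    exact Chebyshev.pow_le_eval_U (Real.one_le_exp (Real.sqrt_nonneg x)) hcosh n
  · have hn' : (1 : ℝ) ≤ n := by exact_mod_cast hn
    have := Chebyshev.abs_eval_U_real_le (y := 1 + x) (abs_le.2 ⟨by linarith, by linarith⟩) n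
    linarith
end

section
/- Fix y ∈ ℝ and t > 0. With n = ⌊tM⌋, one has lim_{M→∞} (1/n) U_n(1 + y/(2M²)) = sin(t√(-y))/(t√(-y)), where for y > 0 the right-hand side is interpreted as sinh(t√y)/(t√y) (i.e., via the analytic continuation of sin(z)/z). -/
/-!
For `y < 0` put `θ_M = 2 arcsin (√(-y) / (2M))`, so that `cos θ_M = 1 + y / (2M²)` and
`M θ_M → √(-y)`. The identity `U_n (cos θ) sin θ = sin ((n + 1) θ)` gives
`U_n / n = sin ((n + 1) θ_M) / (n sin θ_M)`, and since `n θ_M → t √(-y)` while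
`sin θ_M ~ θ_M`, this tends to `sin (t √(-y)) / (t √(-y))`. For `y > 0` the same argument runs
with `cosh`, `sinh` and `arsinh`; for `y = 0` one has `U_n (1) = n + 1`.
-/

open Polynomial Filter Topology Real

theorem tendsto_div_self_nhdsNE_zero {𝕜 : Type*} [NontriviallyNormedField 𝕜] {f : 𝕜 → 𝕜}
    (hf : HasDerivAt f 1 0) (hf0 : f 0 = 0) :
    Tendsto (fun x => f x / x) (𝓝[≠] 0) (𝓝 1) := by
  simpa [hf0, div_eq_inv_mul] using hf.tendsto_slope_zero

theorem tendsto_floor_mul_div_atTop {R : Type*} [TopologicalSpace R] [Field R] [LinearOrder R]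
    [IsStrictOrderedRing R] [OrderTopology R] [FloorRing R] (a : R) :
    Tendsto (fun x => (⌊a * x⌋ : R) / x) atTop (𝓝 a) := by
  have lower : Tendsto (fun x : R => a - x⁻¹) atTop (𝓝 a) := by
    simpa using tendsto_const_nhds.sub (tendsto_inv_atTop_zero (𝕜 := R))
  refine tendsto_of_tendsto_of_tendsto_of_le_of_le' lower tendsto_const_nhds ?_ ?_
  · filter_upwards [eventually_gt_atTop 0] with x hx
    rw [le_div_iff₀ hx, sub_mul, inv_mul_cancel₀ hx.ne']
    exact (Int.sub_one_lt_floor _).le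
  · filter_upwards [eventually_gt_atTop 0] with x hx
    exact (div_le_iff₀ hx).2 (Int.floor_le _)

theorem tendsto_nhdsNE_zero_of_tendsto_natCast_mul {θ : ℕ → ℝ} {b : ℝ} (hb : b ≠ 0)
    (h : Tendsto (fun M : ℕ => M * θ M) atTop (𝓝 b)) : Tendsto θ atTop (𝓝[≠] 0) := by
  refine tendsto_nhdsWithin_iff.2 ⟨?_, ?_⟩
  · have h0 := (tendsto_inv_atTop_zero.comp tendsto_natCast_atTop_atTop).mul h
    rw [zero_mul] at h0
    refine h0.congr' ?_
    filter_upwards [eventually_ne_atTop 0] with M hM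
    simp [hM]
  · filter_upwards [h.eventually_ne hb] with M hM
    exact right_ne_zero_of_mul hM

theorem tendsto_div_of_mul_eq_comp_succ_mul {α : Type*} {l : Filter α} {F : ℝ → ℝ}
    (hF : Tendsto (fun x => F x / x) (𝓝[≠] 0) (𝓝 1)) {c : ℝ} (hFc : ContinuousAt F c)
    (hc : c ≠ 0) {n θ v : α → ℝ} (hθ : Tendsto θ l (𝓝[≠] 0))
    (hnθ : Tendsto (fun i => n i * θ i) l (𝓝 c))
    (hv : ∀ᶠ i in l, v i * F (θ i) = F ((n i + 1) * θ i)) :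
    Tendsto (fun i => v i / n i) l (𝓝 (F c / c)) := by
  have hnum : Tendsto (fun i => F ((n i + 1) * θ i)) l (𝓝 (F c)) := by
    refine hFc.tendsto.comp ?_
    simpa [add_mul] using hnθ.add (tendsto_nhdsWithin_iff.1 hθ).1
  have hden : Tendsto (fun i => n i * θ i * (F (θ i) / θ i)) l (𝓝 c) := by
    simpa using hnθ.mul (hF.comp hθ)
  refine (hnum.div hden hc).congr' ?_
  filter_upwards [hv, (tendsto_nhdsWithin_iff.1 hθ).2,
    (hF.comp hθ).eventually_ne one_ne_zero] with i hvi hθi hFi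
  have hFθ : F (θ i) ≠ 0 := by simpa using left_ne_zero_of_mul hFi
  rw [Pi.div_apply, ← hvi, mul_assoc, mul_div_cancel₀ _ (show θ i ≠ 0 from hθi),
    mul_div_mul_right _ _ hFθ]

theorem tendsto_natCast_mul_comp_div {G : ℝ → ℝ}
    (hG : Tendsto (fun x => G x / x) (𝓝[≠] 0) (𝓝 1)) {c : ℝ} (hc : c ≠ 0) :
    Tendsto (fun M : ℕ => M * G (c / M)) atTop (𝓝 c) := by
  have hcM : Tendsto (fun M : ℕ => c / M) atTop (𝓝[≠] 0) := by
    refine tendsto_nhdsWithin_iff.2 ⟨?_, ?_⟩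
    · exact tendsto_const_nhds.div_atTop tendsto_natCast_atTop_atTop
    · filter_upwards [eventually_ne_atTop 0] with M hM
      exact div_ne_zero hc (Nat.cast_ne_zero.2 hM)
  refine (by simpa using (hG.comp hcM).const_mul c :
      Tendsto (fun M : ℕ => c * (G (c / M) / (c / M))) atTop (𝓝 c)).congr' ?_
  filter_upwards [eventually_ne_atTop 0] with M hM
  field_simp

theorem tendsto_div_floor_mul_of_mul_eq {F : ℝ → ℝ}
    (hF : Tendsto (fun x => F x / x) (𝓝[≠] 0) (𝓝 1)) (hFc : Continuous F) {t b : ℝ}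
    (ht : t ≠ 0) (hb : b ≠ 0) {θ v : ℕ → ℝ} (hθ : Tendsto (fun M : ℕ => M * θ M) atTop (𝓝 b))
    (hv : ∀ᶠ M : ℕ in atTop, v M * F (θ M) = F ((⌊t * M⌋ + 1) * θ M)) :
    Tendsto (fun M : ℕ => v M / ⌊t * M⌋) atTop (𝓝 (F (t * b) / (t * b))) := by
  refine tendsto_div_of_mul_eq_comp_succ_mul hF hFc.continuousAt (mul_ne_zero ht hb)
    (tendsto_nhdsNE_zero_of_tendsto_natCast_mul hb hθ) ?_ hv
  refine (((tendsto_floor_mul_div_atTop t).comp tendsto_natCast_atTop_atTop).mul hθ).congr' ?_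
  filter_upwards [eventually_ne_atTop 0] with M hM
  simp only [Function.comp_apply]
  field_simp

namespace Real

theorem hasDerivAt_arcsin_zero : HasDerivAt arcsin 1 0 := by
  simpa using hasDerivAt_arcsin (x := 0) (by norm_num) (by norm_num)

theorem hasDerivAt_arsinh_zero : HasDerivAt arsinh 1 0 := by
  simpa using hasDerivAt_arsinh 0

theorem cosh_two_mul_eq_one_add (x : ℝ) : cosh (2 * x) = 1 + 2 * sinh x ^ 2 := by
  rw [cosh_two_mul, cosh_sq]
  ring

end Real

theorem tendsto_chebyshevU_one_sub_div_floor {a t : ℝ} (ha : 0 < a) (ht : t ≠ 0) :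
    Tendsto (fun M : ℕ => (Chebyshev.U ℝ ⌊t * M⌋).eval (1 - a / (2 * M ^ 2)) / ⌊t * M⌋) atTop
      (𝓝 (sin (t * √a) / (t * √a))) := by
  have hb : √a / 2 ≠ 0 := by positivity
  have hθ : Tendsto (fun M : ℕ => M * (2 * arcsin (√a / 2 / M))) atTop (𝓝 √a) := by
    simpa [mul_left_comm _ (2 : ℝ), mul_div_cancel₀] using (tendsto_natCast_mul_comp_div
      (tendsto_div_self_nhdsNE_zero hasDerivAt_arcsin_zero arcsin_zero) hb).const_mul 2
  refine tendsto_div_floor_mul_of_mul_eq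
    (tendsto_div_self_nhdsNE_zero (cos_zero ▸ hasDerivAt_sin 0) sin_zero) continuous_sin
    ht (by positivity) hθ ?_
  have hsmall : ∀ᶠ M : ℕ in atTop, √a / 2 / M < 1 :=
    (tendsto_const_nhds.div_atTop tendsto_natCast_atTop_atTop).eventually_lt_const one_pos
  filter_upwards [hsmall] with M hM
  rw [← Chebyshev.U_real_cos, cos_two_mul_eq_one_sub,
    sin_arcsin (by linarith [show 0 ≤ √a / 2 / M by positivity]) hM.le]
  congr 3
  field_simp
  rw [sq_sqrt ha.le]

theorem tendsto_chebyshevU_one_add_div_floor {a t : ℝ} (ha : 0 < a) (ht : t ≠ 0) :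
    Tendsto (fun M : ℕ => (Chebyshev.U ℝ ⌊t * M⌋).eval (1 + a / (2 * M ^ 2)) / ⌊t * M⌋) atTop
      (𝓝 (sinh (t * √a) / (t * √a))) := by
  have hb : √a / 2 ≠ 0 := by positivity
  have hθ : Tendsto (fun M : ℕ => M * (2 * arsinh (√a / 2 / M))) atTop (𝓝 √a) := by
    simpa [mul_left_comm _ (2 : ℝ), mul_div_cancel₀] using (tendsto_natCast_mul_comp_div
      (tendsto_div_self_nhdsNE_zero hasDerivAt_arsinh_zero arsinh_zero) hb).const_mul 2
  refine tendsto_div_floor_mul_of_mul_eq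
    (tendsto_div_self_nhdsNE_zero (cosh_zero ▸ hasDerivAt_sinh 0) sinh_zero) continuous_sinh
    ht (by positivity) hθ (Eventually.of_forall fun M => ?_)
  rw [← Chebyshev.U_real_cosh, cosh_two_mul_eq_one_add, sinh_arsinh]
  congr 3
  field_simp
  rw [sq_sqrt ha.le]

theorem tendsto_chebyshevU_one_div_floor {t : ℝ} (ht : t ≠ 0) :
    Tendsto (fun M : ℕ => (Chebyshev.U ℝ ⌊t * M⌋).eval 1 / ⌊t * M⌋) atTop (𝓝 1) := by
  have hn : Tendsto (fun M : ℕ => (⌊t * M⌋ : ℝ) / M) atTop (𝓝 t) :=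
    (tendsto_floor_mul_div_atTop t).comp tendsto_natCast_atTop_atTop
  have hinv : Tendsto (fun M : ℕ => (M : ℝ)⁻¹) atTop (𝓝 0) :=
    tendsto_inv_atTop_zero.comp tendsto_natCast_atTop_atTop
  have hlim := (hn.add hinv).div hn ht
  rw [add_zero, div_self ht] at hlim
  refine hlim.congr' ?_
  filter_upwards [eventually_ne_atTop 0] with M hM
  rw [Chebyshev.U_eval_one, Pi.div_apply, inv_eq_one_div, ← add_div,
    div_div_div_cancel_right₀ (Nat.cast_ne_zero.2 hM)]

/-- Lemma B.9: with `n = ⌊tM⌋`, `(1/n) U_n(1 + y/(2M²)) → sin(t√(-y))/(t√(-y))`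
as `M → ∞`, where for `y > 0` the right-hand side is `sinh(t√y)/(t√y)` and for
`y = 0` it is `1`. -/
theorem chebyshevU_scaling_limit (y t : ℝ) (ht : 0 < t) :
    Tendsto
      (fun M : ℕ =>
        (1 / (⌊t * (M : ℝ)⌋ : ℝ)) *
          (Chebyshev.U ℝ ⌊t * (M : ℝ)⌋).eval (1 + y / (2 * (M : ℝ) ^ 2)))
      atTop
      (nhds (if y < 0 then Real.sin (t * Real.sqrt (-y)) / (t * Real.sqrt (-y))
             else if y = 0 then 1
             else Real.sinh (t * Real.sqrt y) / (t * Real.sqrt y))) := by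
  simp_rw [one_div_mul_eq_div]
  rcases lt_trichotomy y 0 with hy | rfl | hy
  · rw [if_pos hy]
    simpa [sub_eq_add_neg, neg_div] using
      tendsto_chebyshevU_one_sub_div_floor (neg_pos.2 hy) ht.ne'
  · simpa using tendsto_chebyshevU_one_div_floor ht.ne'
  · rw [if_neg hy.not_gt, if_neg hy.ne']
    exact tendsto_chebyshevU_one_add_div_floor hy ht.ne'
end

section
/- For all real numbers x, y and all positive reals a, b, c, the inequality (a x² + b y² + c (x+y)²)/(ab + bc + ca) ≤ x²/b + y²/a holds. -/
theorem sq_div_add_sq_div_sub_weighted_sq_div_eq {K : Type*} [Field K] {x y a b c : K}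
    (ha : a ≠ 0) (hb : b ≠ 0) (hD : a * b + b * c + c * a ≠ 0) :
    x ^ 2 / b + y ^ 2 / a - (a * x ^ 2 + b * y ^ 2 + c * (x + y) ^ 2) / (a * b + b * c + c * a)
      = c * (a * x - b * y) ^ 2 / (a * b * (a * b + b * c + c * a)) := by
  rw [div_add_div _ _ hb ha, div_sub_div _ _ (mul_ne_zero hb ha) hD,
    div_eq_div_iff (mul_ne_zero (mul_ne_zero hb ha) hD) (mul_ne_zero (mul_ne_zero ha hb) hD)]
  ring

/-- For all reals `x, y` and positive reals `a, b, c`: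
`(a x² + b y² + c (x+y)²)/(ab + bc + ca) ≤ x²/b + y²/a`. -/
theorem quadratic_mean_inequality (x y a b c : ℝ) (ha : 0 < a) (hb : 0 < b) (hc : 0 < c) :
    (a * x ^ 2 + b * y ^ 2 + c * (x + y) ^ 2) / (a * b + b * c + c * a)
      ≤ x ^ 2 / b + y ^ 2 / a := by
  have hD : 0 < a * b + b * c + c * a := by positivity
  rw [← sub_nonneg, sq_div_add_sq_div_sub_weighted_sq_div_eq ha.ne' hb.ne' hD.ne']
  positivity
end

section
/- Define the one-dimensional Jacobi theta function θ₁(x,t) = (1/√(2πt)) ∑_{n∈ℤ} exp(−(x+n)²/(2t)) for x ∈ ℝ, t > 0. Then there exist constants C₃, C₄ > 0 such that for all x ∈ (−1/2, 1/2] and all t > 0, θ₁(x,t) ≤ C₃ ( (1/√t) e^{−C₄ x²/t} + 1 ). -/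
/-!
For `|x| ≤ 1/2` and every integer `n` we have `|x + n| ≥ |n| / 2`, so the `n`-th term of the
theta series is at most `exp (-n² / (8t))`. Keeping the `n = 0` term `exp (-x² / (2t))` exact and
bounding the others by the integral test against the Gaussian integral `∫ exp (-s² / (8t)) = √(8πt)`
gives `θ₁(x, t) ≤ exp (-x² / (2t)) / √(2πt) + 2`, i.e. the claim with `C₃ = 2`, `C₄ = 1/2`.
-/

/-- The one-dimensional Jacobi theta function (wrapped Gaussian heat kernel on ℝ/ℤ). -/
noncomputable def theta1 (x t : ℝ) : ℝ :=
  (1 / Real.sqrt (2 * Real.pi * t)) * ∑' n : ℤ, Real.exp (-(x + n) ^ 2 / (2 * t))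

open Real Set MeasureTheory

section Gaussian

variable {b : ℝ}

lemma antitoneOn_exp_neg_mul_sq (hb : 0 < b) :
    AntitoneOn (fun s : ℝ ↦ exp (-b * s ^ 2)) (Ici 0) :=
  fun _ hs _ _ hst ↦ exp_le_exp.2 <| by
    have := pow_le_pow_left₀ (mem_Ici.1 hs) hst 2
    nlinarith

lemma summable_exp_neg_mul_int_sq (hb : 0 < b) : Summable fun n : ℤ ↦ exp (-b * n ^ 2) := by
  have hnat : Summable fun n : ℕ ↦ exp (-b * (n : ℝ) ^ 2) :=
    (antitoneOn_exp_neg_mul_sq hb).summable_of_integrableOn_Ioi_zero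
      (integrable_exp_neg_mul_sq hb).integrableOn fun _ _ ↦ (exp_pos _).le
  exact summable_int_iff_summable_nat_and_neg.2 ⟨by simpa using hnat, by simpa using hnat⟩

lemma tsum_exp_neg_mul_int_sq_le (hb : 0 < b) : ∑' n : ℤ, exp (-b * n ^ 2) ≤ 1 + √(π / b) := by
  have htail : ∑' n : ℕ, exp (-b * ((n + 1 : ℕ) : ℝ) ^ 2) ≤ √(π / b) / 2 := by
    rw [← integral_gaussian_Ioi]
    exact (antitoneOn_exp_neg_mul_sq hb).tsum_add_one_le_integral
      (integrable_exp_neg_mul_sq hb).integrableOn fun _ _ ↦ (exp_pos _).le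
  rw [tsum_int_eq_zero_add_two_mul_tsum_pnat (fun n ↦ by simp) (summable_exp_neg_mul_int_sq hb)]
  simp only [Int.cast_natCast]
  rw [tsum_pnat_eq_tsum_succ (f := fun n : ℕ ↦ exp (-b * (n : ℝ) ^ 2))]
  simp only [Int.cast_zero, zero_pow two_ne_zero, mul_zero, exp_zero, nsmul_eq_mul]
  linarith

end Gaussian

lemma sq_le_four_mul_sq_add_int {x : ℝ} (hx : |x| ≤ 1 / 2) (n : ℤ) :
    (n : ℝ) ^ 2 ≤ 4 * (x + n) ^ 2 := by
  rcases eq_or_ne n 0 with rfl | hn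
  · simp only [Int.cast_zero, add_zero, zero_pow two_ne_zero]; positivity
  have hn1 : 1 ≤ |(n : ℝ)| := by exact_mod_cast Int.one_le_abs hn
  have : |(n : ℝ)| ≤ 2 * |x + n| := by
    have := abs_sub (x + n) x
    rw [add_sub_cancel_left] at this
    linarith
  calc (n : ℝ) ^ 2 = |(n : ℝ)| ^ 2 := (sq_abs _).symm
    _ ≤ (2 * |x + n|) ^ 2 := pow_le_pow_left₀ (abs_nonneg _) this 2
    _ = 4 * (x + n) ^ 2 := by rw [mul_pow, sq_abs]; norm_num

lemma tsum_exp_neg_mul_sq_add_int_le {a x : ℝ} (ha : 0 < a) (hx : |x| ≤ 1 / 2) :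
    ∑' n : ℤ, exp (-a * (x + n) ^ 2) ≤ exp (-a * x ^ 2) + 2 * √(π / a) := by
  set f : ℤ → ℝ := fun n ↦ exp (-a * (x + n) ^ 2)
  set g : ℤ → ℝ := fun n ↦ exp (-(a / 4) * n ^ 2)
  have hg : HasSum g (∑' n, g n) := (summable_exp_neg_mul_int_sq (by positivity)).hasSum
  have hupdate := hg.update 0 (f 0)
  have hfg : ∀ n, f n ≤ Function.update g 0 (f 0) n := by
    intro n
    rcases eq_or_ne n 0 with rfl | hn
    · simp
    rw [Function.update_of_ne hn]
    refine exp_le_exp.2 ?_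
    nlinarith [sq_le_four_mul_sq_add_int hx n]
  have hf : Summable f :=
    hupdate.summable.of_nonneg_of_le (fun _ ↦ (exp_pos _).le) hfg
  have hsum_g : ∑' n, g n ≤ 1 + 2 * √(π / a) := by
    have := tsum_exp_neg_mul_int_sq_le (b := a / 4) (by positivity)
    rwa [show π / (a / 4) = 2 ^ 2 * (π / a) by ring, sqrt_mul (by positivity),
      sqrt_sq zero_le_two] at this
  have hg0 : g 0 = 1 := by simp [g]
  have hf0 : f 0 = exp (-a * x ^ 2) := by simp [f]
  have := hasSum_le hfg hf.hasSum hupdate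
  linarith

lemma theta1_le_gaussian_add_two {x t : ℝ} (hx : |x| ≤ 1 / 2) (ht : 0 < t) :
    theta1 x t ≤ exp (-x ^ 2 / (2 * t)) / √(2 * π * t) + 2 := by
  have hsum := tsum_exp_neg_mul_sq_add_int_le (a := 1 / (2 * t)) (by positivity) hx
  rw [show π / (1 / (2 * t)) = 2 * π * t by field_simp] at hsum
  have hexponent (y : ℝ) : -(1 / (2 * t)) * y ^ 2 = -y ^ 2 / (2 * t) := by ring
  simp only [hexponent] at hsum
  calc theta1 x t ≤ 1 / √(2 * π * t) * (exp (-x ^ 2 / (2 * t)) + 2 * √(2 * π * t)) :=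
        mul_le_mul_of_nonneg_left hsum (by positivity)
    _ = exp (-x ^ 2 / (2 * t)) / √(2 * π * t) + 2 := by field_simp

/-- Uniform upper bound for the periodic heat kernel:
`θ₁(x,t) ≤ C₃((1/√t) e^{−C₄x²/t} + 1)` for `x ∈ (−1/2, 1/2]`, `t > 0`. -/
theorem theta1_upper_bound :
    ∃ C₃ : ℝ, 0 < C₃ ∧ ∃ C₄ : ℝ, 0 < C₄ ∧
      ∀ x : ℝ, x ∈ Set.Ioc (-(1 : ℝ) / 2) (1 / 2) → ∀ t : ℝ, 0 < t →
        theta1 x t ≤ C₃ * ((1 / Real.sqrt t) * Real.exp (-C₄ * x ^ 2 / t) + 1) := by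
  refine ⟨2, two_pos, 1 / 2, one_half_pos, fun x hx t ht ↦ ?_⟩
  have hx' : |x| ≤ 1 / 2 := abs_le.2 ⟨by linarith [hx.1], hx.2⟩
  have hsqrt : √t ≤ √(2 * π * t) := sqrt_le_sqrt (by nlinarith [pi_gt_three])
  have hexp : exp (-x ^ 2 / (2 * t)) = exp (-(1 / 2) * x ^ 2 / t) := by ring_nf
  calc theta1 x t ≤ exp (-x ^ 2 / (2 * t)) / √(2 * π * t) + 2 :=
        theta1_le_gaussian_add_two hx' ht
    _ ≤ exp (-x ^ 2 / (2 * t)) / √t + 2 := by gcongr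
    _ ≤ 2 * (1 / √t * exp (-(1 / 2) * x ^ 2 / t) + 1) := by
        rw [hexp, one_div_mul_eq_div]
        linarith [div_nonneg (exp_pos (-(1 / 2) * x ^ 2 / t)).le (sqrt_nonneg t)]
end

section
/- For fixed k ∈ ℤ (representing a residue class) and x, y ∈ ℝ, τ₁, τ₂ > 0, one has ∑_{m₁+m₂=k, m₁,m₂∈ℤ} e^{−(m₁+x)²/(2τ₁) − (m₂+y)²/(2τ₂)} ≤ e^{−(k+x+y)²/(2(τ₁+τ₂))} · ∑_{m∈ℤ} e^{−(τ₁+τ₂) m²/(2τ₁τ₂)}. -/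
/-!
Completing the square, `a²/τ₁ + b²/τ₂ = (a+b)²/(τ₁+τ₂) + (τ₂a − τ₁b)²/(τ₁τ₂(τ₁+τ₂))`, factors
every term of the slice sum as `e^{−(k+x+y)²/(2(τ₁+τ₂))}` times a Gaussian `e^{−α(m+c)²}` with
`α = (τ₁+τ₂)/(2τ₁τ₂)` and a real shift `c`. It remains to see that a shifted Gaussian lattice sum
is at most the unshifted one. By Poisson summation (the functional equation of the Hurwitz kernels)
`∑ₙ e^{−π(n+c)²t} = t^{−1/2} ∑ₙ e^{2πicn} e^{−πn²/t}`, and dropping the unimodular phases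
`e^{2πicn}` can only increase the absolute value of the dual sum.
-/

open Real Complex HurwitzZeta

lemma cosKernel_le_cosKernel_zero (a : UnitAddCircle) (s : ℝ) : cosKernel a s ≤ cosKernel 0 s := by
  rcases le_or_gt s 0 with hs | hs
  · simp [cosKernel_undef _ hs]
  induction a using QuotientAddGroup.induction_on with | H a =>
  have h₀ := hasSum_int_cosKernel 0 hs
  simp only [ofReal_zero, mul_zero, zero_mul, Complex.exp_zero, one_mul, hasSum_ofReal,
    QuotientAddGroup.mk_zero] at h₀
  refine (le_abs_self _).trans ?_
  rw [← Real.norm_eq_abs, ← Complex.norm_real]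
  refine (hasSum_int_cosKernel a hs).norm_le_of_bounded h₀ fun n ↦ ?_
  have hphase : ‖cexp (2 * π * I * a * n)‖ = 1 := by
    rw [show (2 * π * I * a * n : ℂ) = ((2 * π * a * n : ℝ) : ℂ) * I by push_cast; ring,
      norm_exp_ofReal_mul_I]
  rw [norm_mul, hphase, one_mul, Complex.norm_real, Real.norm_of_nonneg (exp_pos _).le]

lemma evenKernel_le_evenKernel_zero (a : UnitAddCircle) (t : ℝ) :
    evenKernel a t ≤ evenKernel 0 t := by
  rcases le_or_gt t 0 with ht | ht
  · simp [evenKernel_undef _ ht]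
  rw [evenKernel_functional_equation, evenKernel_functional_equation]
  gcongr
  exact cosKernel_le_cosKernel_zero a _

lemma tsum_exp_neg_mul_int_add_sq_le {α : ℝ} (hα : 0 < α) (c : ℝ) :
    ∑' n : ℤ, rexp (-α * (n + c) ^ 2) ≤ ∑' n : ℤ, rexp (-α * n ^ 2) := by
  have ht : 0 < α / π := div_pos hα pi_pos
  have hkernel (c : ℝ) : ∑' n : ℤ, rexp (-α * (n + c) ^ 2) = evenKernel c (α / π) := by
    rw [← (hasSum_int_evenKernel c ht).tsum_eq]
    congr! 2
    field_simp
  have hle := evenKernel_le_evenKernel_zero c (α / π)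
  rw [← QuotientAddGroup.mk_zero, ← hkernel, ← hkernel] at hle
  simpa only [add_zero] using hle

lemma neg_sq_div_sub_sq_div_eq (s m x y τ₁ τ₂ : ℝ) (hτ₁ : τ₁ ≠ 0) (hτ₂ : τ₂ ≠ 0)
    (hτ : τ₁ + τ₂ ≠ 0) :
    -(s - m + x) ^ 2 / (2 * τ₁) - (m + y) ^ 2 / (2 * τ₂) =
      -(s + x + y) ^ 2 / (2 * (τ₁ + τ₂)) -
        (τ₁ + τ₂) / (2 * τ₁ * τ₂) * (m + (τ₁ * y - τ₂ * (s + x)) / (τ₁ + τ₂)) ^ 2 := by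
  field_simp
  ring

/-- Slice bound for products of Gaussian lattice sums: for a fixed residue `k`,
`∑_{m₁+m₂=k} e^{−(m₁+x)²/(2τ₁) − (m₂+y)²/(2τ₂)}
  ≤ e^{−(k+x+y)²/(2(τ₁+τ₂))} ∑_{m∈ℤ} e^{−(τ₁+τ₂)m²/(2τ₁τ₂)}`. -/
theorem gaussian_lattice_slice_bound (k : ℤ) (x y τ₁ τ₂ : ℝ) (hτ₁ : 0 < τ₁) (hτ₂ : 0 < τ₂) :
    (∑' m : ℤ, Real.exp (-(((k - m : ℤ) : ℝ) + x) ^ 2 / (2 * τ₁)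
        - ((m : ℝ) + y) ^ 2 / (2 * τ₂)))
      ≤ Real.exp (-((k : ℝ) + x + y) ^ 2 / (2 * (τ₁ + τ₂))) *
          ∑' m : ℤ, Real.exp (-(τ₁ + τ₂) * (m : ℝ) ^ 2 / (2 * τ₁ * τ₂)) := by
  have hτ : 0 < τ₁ + τ₂ := add_pos hτ₁ hτ₂
  set α := (τ₁ + τ₂) / (2 * τ₁ * τ₂)
  set c := (τ₁ * y - τ₂ * (k + x)) / (τ₁ + τ₂)
  have hlhs (m : ℤ) : rexp (-(((k - m : ℤ) : ℝ) + x) ^ 2 / (2 * τ₁) - ((m : ℝ) + y) ^ 2 / (2 * τ₂))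
      = rexp (-((k : ℝ) + x + y) ^ 2 / (2 * (τ₁ + τ₂))) * rexp (-α * (m + c) ^ 2) := by
    rw [Int.cast_sub, neg_sq_div_sub_sq_div_eq _ _ _ _ _ _ hτ₁.ne' hτ₂.ne' hτ.ne', sub_eq_add_neg,
      Real.exp_add, neg_mul]
  have hrhs (m : ℤ) : rexp (-(τ₁ + τ₂) * (m : ℝ) ^ 2 / (2 * τ₁ * τ₂)) = rexp (-α * m ^ 2) := by
    rw [neg_mul, neg_div, mul_div_right_comm, neg_mul]
  simp_rw [hlhs, hrhs, tsum_mul_left]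
  exact mul_le_mul_of_nonneg_left (tsum_exp_neg_mul_int_add_sq_le (by positivity) c) (exp_pos _).le
end

section
/- Let h(z) and g(z) be functions holomorphic on the disk |z| < r with r ≥ 1−ε for some ε ∈ (0,1), with 1/h(z) = ∑ h_n z^n and 1/g(z) = ∑ g_n z^n. Suppose there are constants α, β with 0 ≤ β ≤ 1 and β < 2α − 1, and δ₁, δ₂ > 0 such that |h(z)|, |g(z)| ≥ δ₁|z−1|^α and |h(z) − g(z)| ≤ δ₂|z−1|^β for all |z| ≤ 1−ε. Then for every n, |h_n − g_n| ≤ (δ₂/((2α−β−1)δ₁²)) · 2^{α−1−β/2} · (1−ε)^{−n−1/2} · ε^{β−2α+1}. -/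
/-!
On a circle `|z| = ρ < 1 - ε` the function `1/h - 1/g = (g - h)/(h g)` is bounded by
`δ₂/δ₁² · |z - 1|^(-γ)` with `γ = 2α - β > 1`, so Cauchy's estimate bounds the `n`-th coefficient by
`ρ^(-n)` times the mean of `|z - 1|^(-γ)` over the circle. The inequality `cos θ ≤ 1 - 2θ²/π²` gives
`√2 |ρe^{iθ} - 1| ≥ (1 - ρ) + 2√ρ|θ|/π` on `[-π, π]`, and the resulting majorant is integrable
because `γ > 1`, with mean at most `2^(γ/2-1) (1-ρ)^(1-γ) / ((γ-1)√ρ)`. Finally let `ρ → 1 - ε`: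
the circle `|z| = 1 - ε` itself may lie on the boundary of the disc of convergence.
-/

open Real Filter

theorem integral_add_mul_rpow_neg_le {a c γ b : ℝ} (ha : 0 < a) (hc : 0 < c) (hγ : 1 < γ)
    (hb : 0 ≤ b) : ∫ θ in (0 : ℝ)..b, (a + c * θ) ^ (-γ) ≤ a ^ (1 - γ) / (c * (γ - 1)) := by
  have h0 : (0 : ℝ) ∉ Set.uIcc (a + c * 0) (a + c * b) := by
    rw [mul_zero, add_zero, Set.uIcc_of_le (le_add_of_nonneg_right (mul_nonneg hc.le hb))]
    exact fun h => ha.not_ge h.1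
  have hpos : 0 < (a + c * b) ^ (1 - γ) := rpow_pos_of_pos (by positivity) _
  rw [intervalIntegral.integral_comp_add_mul (fun x => x ^ (-γ)) hc.ne',
    integral_rpow (Or.inr ⟨by linarith, h0⟩), mul_zero, add_zero, smul_eq_mul,
    show -γ + 1 = 1 - γ by ring]
  calc c⁻¹ * (((a + c * b) ^ (1 - γ) - a ^ (1 - γ)) / (1 - γ))
      = (a ^ (1 - γ) - (a + c * b) ^ (1 - γ)) / (c * (γ - 1)) := by
        field_simp [show 1 - γ ≠ 0 by linarith, show γ - 1 ≠ 0 by linarith]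
        ring
    _ ≤ a ^ (1 - γ) / (c * (γ - 1)) := by
        gcongr
        exact sub_le_self _ hpos.le

theorem integral_add_mul_abs_rpow_neg_le {a c γ b : ℝ} (ha : 0 < a) (hc : 0 < c) (hγ : 1 < γ)
    (hb : 0 ≤ b) :
    ∫ θ in -b..b, (a + c * |θ|) ^ (-γ) ≤ 2 * (a ^ (1 - γ) / (c * (γ - 1))) := by
  set f : ℝ → ℝ := fun θ => (a + c * |θ|) ^ (-γ)
  have hf : Continuous f := by
    refine (continuous_const.add (continuous_const.mul continuous_abs)).rpow_const
      fun θ => Or.inl (add_pos_of_pos_of_nonneg ha (mul_nonneg hc.le (abs_nonneg θ))).ne'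
  have hneg : ∫ θ in -b..0, f θ = ∫ θ in 0..b, f θ := by
    simpa [f] using (intervalIntegral.integral_comp_neg (a := 0) (b := b) f).symm
  have hpos : ∫ θ in 0..b, f θ = ∫ θ in 0..b, (a + c * θ) ^ (-γ) :=
    intervalIntegral.integral_congr fun θ hθ => by
      rw [Set.uIcc_of_le hb] at hθ
      simp only [f, abs_of_nonneg hθ.1]
  rw [← intervalIntegral.integral_add_adjacent_intervals (b := 0) (hf.intervalIntegrable _ _)
    (hf.intervalIntegrable _ _), hneg, hpos, ← two_mul]
  gcongr
  exact integral_add_mul_rpow_neg_le ha hc hγ hb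

theorem norm_inv_sub_inv_le {𝕜 : Type*} [NormedDivisionRing 𝕜] {a b : 𝕜} {m D : ℝ} (hm : 0 < m)
    (ha : m ≤ ‖a‖) (hb : m ≤ ‖b‖) (hab : ‖a - b‖ ≤ D) : ‖a⁻¹ - b⁻¹‖ ≤ D / m ^ 2 := by
  have ha0 : a ≠ 0 := norm_pos_iff.1 (hm.trans_le ha)
  have hb0 : b ≠ 0 := norm_pos_iff.1 (hm.trans_le hb)
  rw [inv_sub_inv' ha0 hb0, norm_mul, norm_mul, norm_inv, norm_inv, norm_sub_rev]
  have hD : 0 ≤ D := (norm_nonneg _).trans hab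
  calc ‖a‖⁻¹ * ‖a - b‖ * ‖b‖⁻¹ ≤ m⁻¹ * D * m⁻¹ := by
        gcongr
    _ = D / m ^ 2 := by ring

theorem circleMap_zero_ne_one {ρ : ℝ} (hρ : |ρ| ≠ 1) (θ : ℝ) : circleMap 0 ρ θ ≠ 1 := by
  intro h
  apply hρ
  rw [← norm_circleMap_zero ρ θ, h, norm_one]

theorem continuous_norm_circleMap_zero_sub_one_rpow {ρ : ℝ} (hρ : |ρ| ≠ 1) (s : ℝ) :
    Continuous fun θ => ‖circleMap 0 ρ θ - 1‖ ^ s :=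
  ((continuous_circleMap 0 ρ).sub continuous_const).norm.rpow_const fun θ =>
    Or.inl (norm_ne_zero_iff.2 (sub_ne_zero.2 (circleMap_zero_ne_one hρ θ)))

theorem norm_circleMap_zero_sub_one_sq (ρ θ : ℝ) :
    ‖circleMap 0 ρ θ - 1‖ ^ 2 = ρ ^ 2 - 2 * ρ * cos θ + 1 := by
  rw [Complex.sq_norm, Complex.normSq_apply]
  simp only [circleMap, zero_add, Complex.sub_re, Complex.sub_im,
    Complex.mul_re, Complex.mul_im, Complex.ofReal_re, Complex.ofReal_im,
    Complex.exp_ofReal_mul_I_re, Complex.exp_ofReal_mul_I_im, Complex.one_re, Complex.one_im]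
  nlinarith [sin_sq_add_cos_sq θ]

theorem add_mul_abs_le_sqrt_two_mul_norm_circleMap_sub_one {ρ θ : ℝ} (hρ : 0 ≤ ρ)
    (hθ : |θ| ≤ π) :
    (1 - ρ) + 2 * √ρ / π * |θ| ≤ √2 * ‖circleMap 0 ρ θ - 1‖ := by
  have hsq : (2 * √ρ / π * |θ|) ^ 2 = 2 * ρ * (2 / π ^ 2 * θ ^ 2) := by
    rw [mul_pow, div_pow, mul_pow, sq_sqrt hρ, sq_abs]; ring
  have hcos : 2 * ρ * (2 / π ^ 2 * θ ^ 2) ≤ 2 * ρ * (1 - cos θ) := by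
    have := cos_le_one_sub_mul_cos_sq hθ
    gcongr; linarith
  refine le_of_pow_le_pow_left₀ two_ne_zero (by positivity) ?_
  rw [mul_pow, sq_sqrt zero_le_two, norm_circleMap_zero_sub_one_sq]
  nlinarith [sq_nonneg ((1 - ρ) - 2 * √ρ / π * |θ|)]

theorem integral_norm_circleMap_sub_one_rpow_neg_le {ρ γ : ℝ} (hρ0 : 0 < ρ) (hρ1 : ρ < 1)
    (hγ : 1 < γ) :
    ∫ θ in (0 : ℝ)..2 * π, ‖circleMap 0 ρ θ - 1‖ ^ (-γ) ≤
      2 ^ (γ / 2) * (π / (γ - 1)) * (1 - ρ) ^ (1 - γ) / √ρ := by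
  have hρ : |ρ| ≠ 1 := (abs_of_pos hρ0).trans_ne hρ1.ne
  set c : ℝ := 2 * √ρ / π
  have hc : 0 < c := by positivity
  have hpos : ∀ θ, 0 < (1 - ρ) + c * |θ| := fun θ =>
    add_pos_of_pos_of_nonneg (by linarith) (by positivity)
  have hperiod : ∫ θ in (0 : ℝ)..2 * π, ‖circleMap 0 ρ θ - 1‖ ^ (-γ) =
      ∫ θ in -π..π, ‖circleMap 0 ρ θ - 1‖ ^ (-γ) := by
    have := ((periodic_circleMap 0 ρ).comp fun z => ‖z - 1‖ ^ (-γ)).intervalIntegral_add_eq 0 (-π)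
    rwa [zero_add, show -π + 2 * π = π by ring] at this
  have hpt : ∀ θ ∈ Set.Icc (-π) π,
      ‖circleMap 0 ρ θ - 1‖ ^ (-γ) ≤ 2 ^ (γ / 2) * ((1 - ρ) + c * |θ|) ^ (-γ) := by
    intro θ hθ
    calc ‖circleMap 0 ρ θ - 1‖ ^ (-γ) ≤ (((1 - ρ) + c * |θ|) / √2) ^ (-γ) :=
          rpow_le_rpow_of_nonpos (div_pos (hpos θ) (by positivity)) ((div_le_iff₀' (by positivity)).2
            (add_mul_abs_le_sqrt_two_mul_norm_circleMap_sub_one hρ0.le (abs_le.2 hθ)))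
            (by linarith)
      _ = 2 ^ (γ / 2) * ((1 - ρ) + c * |θ|) ^ (-γ) := by
          rw [div_rpow (hpos θ).le (sqrt_nonneg 2), sqrt_eq_rpow, ← rpow_mul zero_le_two,
            div_eq_mul_inv, ← rpow_neg zero_le_two, mul_comm]
          ring_nf
  have hmaj : Continuous fun θ => 2 ^ (γ / 2) * ((1 - ρ) + c * |θ|) ^ (-γ) :=
    continuous_const.mul <| (continuous_const.add (continuous_const.mul continuous_abs)).rpow_const
      fun θ => Or.inl (hpos θ).ne'
  calc ∫ θ in (0 : ℝ)..2 * π, ‖circleMap 0 ρ θ - 1‖ ^ (-γ)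
      = ∫ θ in -π..π, ‖circleMap 0 ρ θ - 1‖ ^ (-γ) := hperiod
    _ ≤ ∫ θ in -π..π, 2 ^ (γ / 2) * ((1 - ρ) + c * |θ|) ^ (-γ) :=
        intervalIntegral.integral_mono_on (by linarith [pi_pos])
          ((continuous_norm_circleMap_zero_sub_one_rpow hρ _).intervalIntegrable _ _)
          (hmaj.intervalIntegrable _ _) hpt
    _ ≤ 2 ^ (γ / 2) * (2 * ((1 - ρ) ^ (1 - γ) / (c * (γ - 1)))) := by
        rw [intervalIntegral.integral_const_mul]
        gcongr
        exact integral_add_mul_abs_rpow_neg_le (by linarith) hc hγ pi_pos.le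
    _ = 2 ^ (γ / 2) * (π / (γ - 1)) * (1 - ρ) ^ (1 - γ) / √ρ := by
        have : √ρ ≠ 0 := (sqrt_pos.2 hρ0).ne'
        have : γ - 1 ≠ 0 := by linarith
        simp only [c]
        field_simp

section PowerSeries

variable {d : ℕ → ℂ} {F : ℂ → ℂ} {r : ℝ}

theorem le_radius_ofScalars_of_hasSum
    (hF : ∀ z : ℂ, ‖z‖ < r → HasSum (fun k => d k * z ^ k) (F z)) :
    ENNReal.ofReal r ≤ (FormalMultilinearSeries.ofScalars ℂ d).radius := by
  refine ENNReal.le_of_forall_nnreal_lt fun t ht => ?_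
  have htr : ‖(t : ℂ)‖ < r := by
    simpa using (ENNReal.coe_lt_ofReal).1 ht
  refine FormalMultilinearSeries.le_radius_of_tendsto _ (l := 0) ?_
  simpa [FormalMultilinearSeries.ofScalars_norm] using
    (hF t htr).summable.tendsto_atTop_zero.norm

theorem hasFPowerSeriesOnBall_ofScalars_of_hasSum (hr : 0 < r)
    (hF : ∀ z : ℂ, ‖z‖ < r → HasSum (fun k => d k * z ^ k) (F z)) :
    HasFPowerSeriesOnBall F (FormalMultilinearSeries.ofScalars ℂ d) 0 (ENNReal.ofReal r) where
  r_le := le_radius_ofScalars_of_hasSum hF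
  r_pos := ENNReal.ofReal_pos.2 hr
  hasSum {y} hy := by
    simpa [FormalMultilinearSeries.ofScalars_apply_eq, mul_comm] using hF y (by simpa using hy)

theorem norm_coeff_le_of_hasSum
    (hF : ∀ z : ℂ, ‖z‖ < r → HasSum (fun k => d k * z ^ k) (F z)) {ρ : ℝ} (hρ : 0 < ρ)
    (hρr : ρ < r) (n : ℕ) :
    ‖d n‖ ≤ (2 * π)⁻¹ * (∫ θ in (0 : ℝ)..2 * π, ‖F (circleMap 0 ρ θ)‖) * ρ⁻¹ ^ n := by
  have hp := hasFPowerSeriesOnBall_ofScalars_of_hasSum (hρ.trans hρr) hF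
  have hdiff : DifferentiableOn ℂ F (Metric.closedBall 0 (ρ.toNNReal : ℝ)) := by
    refine hp.differentiableOn.mono fun z hz => ?_
    rw [Real.coe_toNNReal _ hρ.le, Metric.mem_closedBall] at hz
    simpa [Metric.eball_ofReal] using hz.trans_lt hρr
  have hcauchy := hdiff.hasFPowerSeriesOnBall (Real.toNNReal_pos.2 hρ)
  rw [← FormalMultilinearSeries.ofScalars_norm (E := ℂ),
    hp.hasFPowerSeriesAt.eq_formalMultilinearSeries hcauchy.hasFPowerSeriesAt,
    Real.coe_toNNReal _ hρ.le]
  simpa [abs_of_pos hρ] using norm_cauchyPowerSeries_le F 0 ρ n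

theorem norm_coeff_le_of_norm_le_on_circle
    (hF : ∀ z : ℂ, ‖z‖ < r → HasSum (fun k => d k * z ^ k) (F z)) {ρ M γ : ℝ} (hρ0 : 0 < ρ)
    (hρ1 : ρ < 1) (hρr : ρ < r) (hγ : 1 < γ) (hM : 0 ≤ M)
    (hFle : ∀ θ, ‖F (circleMap 0 ρ θ)‖ ≤ M * ‖circleMap 0 ρ θ - 1‖ ^ (-γ)) (n : ℕ) :
    ‖d n‖ ≤ M / (γ - 1) * 2 ^ (γ / 2 - 1) * ρ ^ (-(n : ℝ) - 1 / 2) * (1 - ρ) ^ (1 - γ) := by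
  have hmaj : ∫ θ in (0 : ℝ)..2 * π, ‖F (circleMap 0 ρ θ)‖ ≤
      ∫ θ in (0 : ℝ)..2 * π, M * ‖circleMap 0 ρ θ - 1‖ ^ (-γ) := by
    simp only [intervalIntegral.integral_of_le two_pi_pos.le]
    refine MeasureTheory.integral_mono_of_nonneg (.of_forall fun _ => norm_nonneg _) ?_
      (.of_forall hFle)
    exact (continuous_const.mul (continuous_norm_circleMap_zero_sub_one_rpow
      ((abs_of_pos hρ0).trans_ne hρ1.ne) _)).integrableOn_Icc.mono_set Set.Ioc_subset_Icc_self
  calc ‖d n‖ ≤ (2 * π)⁻¹ * (∫ θ in (0 : ℝ)..2 * π, ‖F (circleMap 0 ρ θ)‖) * ρ⁻¹ ^ n :=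
        norm_coeff_le_of_hasSum hF hρ0 hρr n
    _ ≤ (2 * π)⁻¹ * (M * (2 ^ (γ / 2) * (π / (γ - 1)) * (1 - ρ) ^ (1 - γ) / √ρ)) * ρ⁻¹ ^ n := by
        rw [intervalIntegral.integral_const_mul] at hmaj
        gcongr
        exact hmaj.trans (by gcongr; exact integral_norm_circleMap_sub_one_rpow_neg_le hρ0 hρ1 hγ)
    _ = M / (γ - 1) * 2 ^ (γ / 2 - 1) * ρ ^ (-(n : ℝ) - 1 / 2) * (1 - ρ) ^ (1 - γ) := by
        rw [rpow_sub zero_lt_two, rpow_one, rpow_sub hρ0, rpow_neg hρ0.le, rpow_natCast,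
          ← sqrt_eq_rpow, inv_pow]
        have : √ρ ≠ 0 := (sqrt_pos.2 hρ0).ne'
        have : γ - 1 ≠ 0 := by linarith
        field_simp

theorem norm_coeff_le_of_norm_le_rpow_neg
    (hF : ∀ z : ℂ, ‖z‖ < r → HasSum (fun k => d k * z ^ k) (F z)) {R M γ : ℝ} (hR0 : 0 < R)
    (hR1 : R < 1) (hRr : R ≤ r) (hγ : 1 < γ) (hM : 0 ≤ M)
    (hFle : ∀ z : ℂ, ‖z‖ < R → ‖F z‖ ≤ M * ‖z - 1‖ ^ (-γ)) (n : ℕ) :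
    ‖d n‖ ≤ M / (γ - 1) * 2 ^ (γ / 2 - 1) * R ^ (-(n : ℝ) - 1 / 2) * (1 - R) ^ (1 - γ) := by
  have hbound : ∀ ρ ∈ Set.Ioo 0 R,
      ‖d n‖ ≤ M / (γ - 1) * 2 ^ (γ / 2 - 1) * ρ ^ (-(n : ℝ) - 1 / 2) * (1 - ρ) ^ (1 - γ) :=
    fun ρ ⟨hρ0, hρR⟩ => norm_coeff_le_of_norm_le_on_circle hF hρ0 (hρR.trans hR1)
      (hρR.trans_le hRr) hγ hM (fun θ => hFle _ (by simpa [abs_of_pos hρ0] using hρR)) n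
  have hcont : ContinuousAt
      (fun ρ : ℝ => M / (γ - 1) * 2 ^ (γ / 2 - 1) * ρ ^ (-(n : ℝ) - 1 / 2) * (1 - ρ) ^ (1 - γ))
      R := by
    have : R ≠ 0 := hR0.ne'
    have : 1 - R ≠ 0 := by linarith
    fun_prop (disch := exact Or.inl ‹_›)
  exact ge_of_tendsto (hcont.tendsto.mono_left nhdsWithin_le_nhds)
    (eventually_of_mem (Ioo_mem_nhdsLT hR0) hbound)

end PowerSeries

theorem coefficient_comparison_general
    (ε r α β δ₁ δ₂ : ℝ) (hε : ε ∈ Set.Ioo (0 : ℝ) 1) (hr : 1 - ε ≤ r)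
    (h g : ℂ → ℂ) (hc gc : ℕ → ℂ)
    (hβα : β < 2 * α - 1)
    (hδ₁ : 0 < δ₁) (hδ₂ : 0 < δ₂)
    (hsum : ∀ z : ℂ, ‖z‖ < r → HasSum (fun n : ℕ => hc n * z ^ n) (1 / h z))
    (gsum : ∀ z : ℂ, ‖z‖ < r → HasSum (fun n : ℕ => gc n * z ^ n) (1 / g z))
    (hlow : ∀ z : ℂ, ‖z‖ ≤ 1 - ε → δ₁ * ‖z - 1‖ ^ α ≤ ‖h z‖)
    (glow : ∀ z : ℂ, ‖z‖ ≤ 1 - ε → δ₁ * ‖z - 1‖ ^ α ≤ ‖g z‖)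
    (hdiff : ∀ z : ℂ, ‖z‖ ≤ 1 - ε → ‖h z - g z‖ ≤ δ₂ * ‖z - 1‖ ^ β) :
    ∀ n : ℕ, ‖hc n - gc n‖
      ≤ δ₂ / ((2 * α - β - 1) * δ₁ ^ 2) * (2 : ℝ) ^ (α - 1 - β / 2)
          * (1 - ε) ^ (-(n : ℝ) - 1 / 2) * ε ^ (β - 2 * α + 1) := by
  obtain ⟨hε0, hε1⟩ := hε
  have hF : ∀ z : ℂ, ‖z‖ < r →
      HasSum (fun k => (hc k - gc k) * z ^ k) ((h z)⁻¹ - (g z)⁻¹) := fun z hz => by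
    simpa only [sub_mul, one_div] using (hsum z hz).sub (gsum z hz)
  have hFle : ∀ z : ℂ, ‖z‖ < 1 - ε →
      ‖(h z)⁻¹ - (g z)⁻¹‖ ≤ δ₂ / δ₁ ^ 2 * ‖z - 1‖ ^ (-(2 * α - β)) := by
    intro z hz
    have hz1 : 0 < ‖z - 1‖ := by
      have := norm_sub_norm_le 1 z
      rw [norm_one, norm_sub_rev] at this
      linarith
    calc ‖(h z)⁻¹ - (g z)⁻¹‖ ≤ δ₂ * ‖z - 1‖ ^ β / (δ₁ * ‖z - 1‖ ^ α) ^ 2 :=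
          norm_inv_sub_inv_le (by positivity) (hlow z hz.le) (glow z hz.le) (hdiff z hz.le)
      _ = δ₂ / δ₁ ^ 2 * ‖z - 1‖ ^ (-(2 * α - β)) := by
          rw [neg_sub, rpow_sub hz1, mul_pow, ← rpow_mul_natCast hz1.le, Nat.cast_ofNat,
            mul_comm α]
          field_simp
  intro n
  calc ‖hc n - gc n‖
      ≤ δ₂ / δ₁ ^ 2 / (2 * α - β - 1) * 2 ^ ((2 * α - β) / 2 - 1)
          * (1 - ε) ^ (-(n : ℝ) - 1 / 2) * (1 - (1 - ε)) ^ (1 - (2 * α - β)) :=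
        norm_coeff_le_of_norm_le_rpow_neg hF (by linarith) (by linarith) hr (by linarith)
          (by positivity) hFle n
    _ = _ := by
        rw [sub_sub_cancel, div_div, mul_comm (δ₁ ^ 2)]
        ring_nf

/-- Lemma B.2 (coefficient comparison): if `1/h = ∑ hₙ zⁿ` and `1/g = ∑ gₙ zⁿ` on the
disk of radius `r ≥ 1−ε`, with `|h|, |g| ≥ δ₁|z−1|^α` and `|h−g| ≤ δ₂|z−1|^β` for
`|z| ≤ 1−ε`, `0 ≤ β ≤ 1`, `β < 2α−1`, then
`|hₙ − gₙ| ≤ (δ₂/((2α−β−1)δ₁²)) 2^{α−1−β/2} (1−ε)^{−n−1/2} ε^{β−2α+1}`. -/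
theorem coefficient_comparison
    (ε r α β δ₁ δ₂ : ℝ) (hε : ε ∈ Set.Ioo (0 : ℝ) 1) (hr : 1 - ε ≤ r)
    (h g : ℂ → ℂ) (hc gc : ℕ → ℂ)
    (hhol : DifferentiableOn ℂ h (Metric.ball 0 r))
    (ghol : DifferentiableOn ℂ g (Metric.ball 0 r))
    (hβ0 : 0 ≤ β) (hβ1 : β ≤ 1) (hβα : β < 2 * α - 1)
    (hδ₁ : 0 < δ₁) (hδ₂ : 0 < δ₂)
    (hsum : ∀ z : ℂ, ‖z‖ < r → HasSum (fun n : ℕ => hc n * z ^ n) (1 / h z))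
    (gsum : ∀ z : ℂ, ‖z‖ < r → HasSum (fun n : ℕ => gc n * z ^ n) (1 / g z))
    (hlow : ∀ z : ℂ, ‖z‖ ≤ 1 - ε → δ₁ * ‖z - 1‖ ^ α ≤ ‖h z‖)
    (glow : ∀ z : ℂ, ‖z‖ ≤ 1 - ε → δ₁ * ‖z - 1‖ ^ α ≤ ‖g z‖)
    (hdiff : ∀ z : ℂ, ‖z‖ ≤ 1 - ε → ‖h z - g z‖ ≤ δ₂ * ‖z - 1‖ ^ β) :
    ∀ n : ℕ, ‖hc n - gc n‖
      ≤ δ₂ / ((2 * α - β - 1) * δ₁ ^ 2) * (2 : ℝ) ^ (α - 1 - β / 2)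
          * (1 - ε) ^ (-(n : ℝ) - 1 / 2) * ε ^ (β - 2 * α + 1) :=
  coefficient_comparison_general ε r α β δ₁ δ₂ hε hr h g hc gc hβα hδ₁ hδ₂ hsum gsum hlow glow hdiff
end
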